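/- Let P ⊆ ℝ² be a finite set. Let OPT(P) be the minimum number of axis-aligned closed squares of side 2 whose union contains P, and let N(P) be the number of grid cells [2i, 2i+2) × [2j, 2j+2), (i, j) ∈ ℤ², that contain at least one point of P. Then OPT(P) ≤ N(P) ≤ 4·OPT(P). -/
import Mathlib


/-- The minimum number of axis-aligned closed squares of side 2 whose union contains `P`. -/
noncomputable def squareCoverNum (P : Finset (ℝ × ℝ)) : ℕ :=
  sInf {n | ∃ c : Fin n → ℝ × ℝ,
    ↑P ⊆ ⋃ i, Set.Icc (c i).1 ((c i).1 + 2) ×ˢ Set.Icc (c i).2 ((c i).2 + 2)}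

/-- The number of grid cells `[2i, 2i+2) × [2j, 2j+2)` containing at least one point of `P`. -/
noncomputable def nonemptyCellNum (P : Finset (ℝ × ℝ)) : ℕ :=
  {q : ℤ × ℤ | ∃ p ∈ P,
    p.1 ∈ Set.Ico (2 * q.1 : ℝ) (2 * q.1 + 2) ∧
    p.2 ∈ Set.Ico (2 * q.2 : ℝ) (2 * q.2 + 2)}.ncard

noncomputable def cellOf (p : ℝ × ℝ) : ℤ × ℤ := (⌊p.1 / 2⌋, ⌊p.2 / 2⌋)

lemma ico_iff_floor (x : ℝ) (q : ℤ) :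
    x ∈ Set.Ico (2 * q : ℝ) (2 * q + 2) ↔ ⌊x / 2⌋ = q := by
  rw [Int.floor_eq_iff]
  constructor
  · rintro ⟨h1, h2⟩
    constructor <;> [skip; push_cast] <;> linarith
  · rintro ⟨h1, h2⟩
    rw [Set.mem_Ico]
    constructor <;> linarith

lemma cellset_eq (P : Finset (ℝ × ℝ)) :
    {q : ℤ × ℤ | ∃ p ∈ P,
      p.1 ∈ Set.Ico (2 * q.1 : ℝ) (2 * q.1 + 2) ∧
      p.2 ∈ Set.Ico (2 * q.2 : ℝ) (2 * q.2 + 2)} = ↑(P.image cellOf) := by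
  ext q
  simp only [Set.mem_setOf_eq, Finset.coe_image, Set.mem_image, Finset.mem_coe]
  constructor
  · rintro ⟨p, hp, h1, h2⟩
    rw [ico_iff_floor] at h1 h2
    exact ⟨p, hp, Prod.ext h1 h2⟩
  · rintro ⟨p, hp, rfl⟩
    exact ⟨p, hp, (ico_iff_floor _ _).mpr rfl, (ico_iff_floor _ _).mpr rfl⟩

lemma cellnum_eq (P : Finset (ℝ × ℝ)) :
    nonemptyCellNum P = (P.image cellOf).card := by
  rw [nonemptyCellNum, cellset_eq, Set.ncard_coe_finset]

theorem stmt_11 (P : Finset (ℝ × ℝ)) :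
    squareCoverNum P ≤ nonemptyCellNum P ∧ nonemptyCellNum P ≤ 4 * squareCoverNum P := by
  constructor
  · -- OPT ≤ N
    rw [cellnum_eq]
    apply Nat.sInf_le
    set m := (P.image cellOf).card with hm
    let e := (P.image cellOf).equivFin
    refine ⟨fun i => (2 * ((e.symm i : ℤ × ℤ).1 : ℝ), 2 * ((e.symm i : ℤ × ℤ).2 : ℝ)), ?_⟩
    intro p hp
    simp only [Finset.mem_coe] at hp
    refine Set.mem_iUnion.mpr ⟨e ⟨cellOf p, Finset.mem_image_of_mem _ hp⟩, ?_⟩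
    simp only [Equiv.symm_apply_apply]
    have h1 := Int.floor_le (p.1 / 2)
    have h2 := Int.lt_floor_add_one (p.1 / 2)
    have h3 := Int.floor_le (p.2 / 2)
    have h4 := Int.lt_floor_add_one (p.2 / 2)
    refine ⟨⟨?_, ?_⟩, ?_, ?_⟩ <;> simp only [cellOf] <;> linarith
  · -- N ≤ 4·OPT
    have hne : {n | ∃ c : Fin n → ℝ × ℝ,
        ↑P ⊆ ⋃ i, Set.Icc (c i).1 ((c i).1 + 2) ×ˢ Set.Icc (c i).2 ((c i).2 + 2)}.Nonempty := by
      refine ⟨P.card, fun i => (P.equivFin.symm i : ℝ × ℝ), fun p hp => ?_⟩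
      simp only [Finset.mem_coe] at hp
      refine Set.mem_iUnion.mpr ⟨P.equivFin ⟨p, hp⟩, ?_⟩
      simp only [Equiv.symm_apply_apply]
      constructor <;> constructor <;> norm_num
    have hmem := Nat.sInf_mem hne
    obtain ⟨c, hc⟩ := hmem
    set n := squareCoverNum P with hn
    rw [cellnum_eq]
    -- each square meets at most 4 cells
    let T : Fin n → Finset (ℤ × ℤ) := fun i =>
      ({⌊(c i).1 / 2⌋, ⌊(c i).1 / 2⌋ + 1} : Finset ℤ) ×ˢ
      ({⌊(c i).2 / 2⌋, ⌊(c i).2 / 2⌋ + 1} : Finset ℤ)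
    have hsub : P.image cellOf ⊆ Finset.univ.biUnion T := by
      intro q hq
      obtain ⟨p, hp, rfl⟩ := Finset.mem_image.mp hq
      obtain ⟨s, hs⟩ := Set.mem_iUnion.mp (hc (Finset.mem_coe.mpr hp))
      refine Finset.mem_biUnion.mpr ⟨s, Finset.mem_univ _, ?_⟩
      obtain ⟨⟨ha1, ha2⟩, ⟨hb1, hb2⟩⟩ := hs
      have k1 : ⌊(c s).1 / 2⌋ ≤ ⌊p.1 / 2⌋ := Int.floor_le_floor (by linarith)
      have k2 : ⌊p.1 / 2⌋ ≤ ⌊(c s).1 / 2⌋ + 1 := by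
        have : ⌊p.1 / 2⌋ ≤ ⌊(c s).1 / 2 + 1⌋ := Int.floor_le_floor (by linarith)
        rwa [Int.floor_add_one] at this
      have k3 : ⌊(c s).2 / 2⌋ ≤ ⌊p.2 / 2⌋ := Int.floor_le_floor (by linarith)
      have k4 : ⌊p.2 / 2⌋ ≤ ⌊(c s).2 / 2⌋ + 1 := by
        have : ⌊p.2 / 2⌋ ≤ ⌊(c s).2 / 2 + 1⌋ := Int.floor_le_floor (by linarith)
        rwa [Int.floor_add_one] at this
      simp only [T, Finset.mem_product, Finset.mem_insert, Finset.mem_singleton, cellOf]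
      omega
    calc (P.image cellOf).card ≤ (Finset.univ.biUnion T).card := Finset.card_le_card hsub
      _ ≤ ∑ i, (T i).card := Finset.card_biUnion_le
      _ ≤ ∑ _i : Fin n, 4 := Finset.sum_le_sum (fun i _ => by
          simp only [T, Finset.card_product]
          have h1 : ({⌊(c i).1 / 2⌋, ⌊(c i).1 / 2⌋ + 1} : Finset ℤ).card ≤ 2 :=
            Finset.card_insert_le _ _ |>.trans (by simp)
          have h2 : ({⌊(c i).2 / 2⌋, ⌊(c i).2 / 2⌋ + 1} : Finset ℤ).card ≤ 2 :=
            Finset.card_insert_le _ _ |>.trans (by simp)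
          calc _ ≤ 2 * 2 := Nat.mul_le_mul h1 h2
            _ = 4 := rfl)
      _ = 4 * n := by simp [Nat.mul_comm]
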